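/- With constant meeting rates and frictions growing without bound, firm sizes become uniform: the kernel K_r(t) = r(r+1)/(r + 2·min(t,1−t))² converges to 1 uniformly on [0,1] as r → ∞; consequently, for any integrable ℓ : [0,1] → ℝ, the function s_r(y) = ∫₀¹ r(r+1)·ℓ(x)/(r + 2·d(x,y))² dx converges uniformly in y to the constant ∫₀¹ ℓ(x) dx as r → ∞. -/

import Mathlib

/-!
For `0 ≤ t ≤ 1/2` the numerator of `K_r(t) - 1 = (r - 4rt - 4t²) / (r + 2t)²` is at most `r + 1`
in absolute value while the denominator is at least `r²`, so `|K_r(t) - 1| ≤ 2 / r` uniformly.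
The circle distance is the norm on `ℝ ⧸ ℤ`, hence never exceeds `1/2`, so the same bound holds for
`K_r(d(x, y))`, and integrating it against `|ℓ|` gives `|s_r(y) - ∫ ℓ| ≤ (2 / r) ∫ |ℓ|`.
-/

open MeasureTheory

/-- Distance on the circle of circumference 1: `d(x,y) = min_{k ∈ ℤ} |x - y + k|`. -/
noncomputable def circleDist (x y : ℝ) : ℝ :=
  sInf {v : ℝ | ∃ k : ℤ, v = |x - y + (k : ℝ)|}

open Filter Set

theorem circleDist_eq_norm (x y : ℝ) : circleDist x y = ‖((x - y : ℝ) : UnitAddCircle)‖ := by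
  refine IsLeast.csInf_eq ⟨⟨-round (x - y), ?_⟩, ?_⟩
  · rw [UnitAddCircle.norm_eq, Int.cast_neg, ← sub_eq_add_neg]
  · rintro v ⟨k, rfl⟩
    have hk : ((x - y + k : ℝ) : UnitAddCircle) = (x - y : ℝ) := by
      rw [AddCircle.coe_add, ← zsmul_one, AddCircle.coe_zsmul, AddCircle.coe_period, smul_zero,
        add_zero]
    rw [← hk]
    exact QuotientAddGroup.norm_mk_le_norm

theorem circleDist_nonneg (x y : ℝ) : 0 ≤ circleDist x y :=
  (circleDist_eq_norm x y).symm ▸ norm_nonneg _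

theorem circleDist_le_half (x y : ℝ) : circleDist x y ≤ 1 / 2 := by
  simpa [circleDist_eq_norm] using
    AddCircle.norm_le_half_period 1 (x := ((x - y : ℝ) : UnitAddCircle)) one_ne_zero

theorem continuous_circleDist_left (y : ℝ) : Continuous fun x => circleDist x y := by
  simp_rw [circleDist_eq_norm]
  exact continuous_norm.comp ((AddCircle.continuous_mk' 1).comp (continuous_sub_right y))

theorem tendstoUniformly_integral_mul {ι β α : Type*} [MeasurableSpace α] {μ : Measure α}
    {l : Filter ι} {K : ι → β → α → ℝ} {f : α → ℝ} (hKm : ∀ i y, AEStronglyMeasurable (K i y) μ)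
    (hK : TendstoUniformly (fun i (p : β × α) => K i p.1 p.2) 1 l) (hf : Integrable f μ) :
    TendstoUniformly (fun i y => ∫ x, K i y x * f x ∂μ) (fun _ => ∫ x, f x ∂μ) l := by
  rw [Metric.tendstoUniformly_iff] at hK ⊢
  intro ε hε
  set C := ∫ x, |f x| ∂μ
  have hC : 0 ≤ C := integral_nonneg fun x => abs_nonneg (f x)
  set δ := ε / (C + 1)
  have hδ : 0 < δ := by positivity
  filter_upwards [hK δ hδ] with i hi y
  have hclose : ∀ x, ‖K i y x - 1‖ ≤ δ := fun x => by
    simpa [dist_eq_norm'] using (hi (y, x)).le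
  have hint : Integrable (fun x => K i y x * f x) μ :=
    hf.bdd_mul (hKm i y) (ae_of_all _ fun x => norm_le_norm_add_const_of_dist_le
      (dist_eq_norm (K i y x) 1 ▸ hclose x))
  calc dist (∫ x, f x ∂μ) (∫ x, K i y x * f x ∂μ)
      = ‖∫ x, (K i y x - 1) * f x ∂μ‖ := by
        simp_rw [sub_one_mul]
        rw [dist_eq_norm', integral_sub hint hf]
    _ ≤ ∫ x, δ * |f x| ∂μ := norm_integral_le_of_norm_le (hf.abs.const_mul δ)
        (ae_of_all _ fun x => by
          rw [norm_mul, Real.norm_eq_abs (f x)]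
          exact mul_le_mul_of_nonneg_right (hclose x) (abs_nonneg _))
    _ = δ * C := integral_const_mul δ _
    _ < ε := by
        rw [div_mul_eq_mul_div, div_lt_iff₀ (by positivity)]
        nlinarith

noncomputable def frictionKernel (r t : ℝ) : ℝ := r * (r + 1) / (r + 2 * t) ^ 2

theorem abs_frictionKernel_sub_one_le {r t : ℝ} (hr : 1 ≤ r) (ht₀ : 0 ≤ t) (ht : t ≤ 1 / 2) :
    |frictionKernel r t - 1| ≤ 2 / r := by
  have hr₀ : 0 < r := zero_lt_one.trans_le hr
  have hd : 0 < (r + 2 * t) ^ 2 := by positivity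
  have hnum : |r * (r + 1) - (r + 2 * t) ^ 2| ≤ r + 1 := abs_le.2 ⟨by nlinarith, by nlinarith⟩
  rw [frictionKernel, div_sub_one hd.ne', abs_div, abs_of_pos hd, div_le_div_iff₀ hd hr₀]
  nlinarith

theorem tendstoUniformlyOn_frictionKernel :
    TendstoUniformlyOn frictionKernel 1 atTop (Icc 0 (1 / 2)) := by
  rw [Metric.tendstoUniformlyOn_iff]
  intro ε hε
  have h2r : Tendsto (fun r : ℝ => 2 / r) atTop (nhds 0) :=
    tendsto_const_nhds.div_atTop tendsto_id
  filter_upwards [eventually_ge_atTop 1, h2r.eventually (gt_mem_nhds hε)] with r hr hrε t ht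
  rw [dist_comm, Real.dist_eq]
  exact (abs_frictionKernel_sub_one_le hr ht.1 ht.2).trans_lt hrε

theorem tendstoUniformlyOn_frictionKernel_comp {γ : Type*} {s : Set γ} {g : γ → ℝ}
    (hg : MapsTo g s (Icc 0 (1 / 2))) :
    TendstoUniformlyOn (fun r c => frictionKernel r (g c)) 1 atTop s :=
  (tendstoUniformlyOn_frictionKernel.comp g).mono hg

/-- With frictions growing without bound, the kernel converges uniformly to `1`
on `[0,1]`, and consequently for any integrable preference density `ℓ` the firm
size distribution converges uniformly to the constant `∫₀¹ ℓ`. -/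
theorem large_frictions_uniformize (ℓ : ℝ → ℝ)
    (hl : IntervalIntegrable ℓ volume 0 1) :
    TendstoUniformlyOn
      (fun (r : ℝ) (t : ℝ) => r * (r + 1) / (r + 2 * min t (1 - t)) ^ 2)
      (fun _ => (1:ℝ)) Filter.atTop (Set.Icc 0 1) ∧
    TendstoUniformlyOn
      (fun (r : ℝ) (y : ℝ) =>
        ∫ x in (0:ℝ)..1, r * (r + 1) * ℓ x / (r + 2 * circleDist x y) ^ 2)
      (fun _ => ∫ x in (0:ℝ)..1, ℓ x) Filter.atTop (Set.Icc 0 1) := by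
  refine ⟨tendstoUniformlyOn_frictionKernel_comp fun t ht =>
    ⟨le_min ht.1 (sub_nonneg.2 ht.2), by grind⟩, ?_⟩
  have hK := tendstoUniformlyOn_frictionKernel_comp (s := univ)
    (g := fun p : ℝ × ℝ => circleDist p.2 p.1)
    fun p _ => ⟨circleDist_nonneg p.2 p.1, circleDist_le_half p.2 p.1⟩
  have hKm (r y : ℝ) : AEStronglyMeasurable (fun x => frictionKernel r (circleDist x y))
      (volume.restrict (Ioc 0 1)) := by
    have hd := (continuous_circleDist_left y).measurable
    unfold frictionKernel
    exact Measurable.aestronglyMeasurable (by fun_prop)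
  have hs := tendstoUniformly_integral_mul hKm (tendstoUniformlyOn_univ.1 hK) hl.1
  simpa only [intervalIntegral.integral_of_le zero_le_one, frictionKernel, div_mul_eq_mul_div]
    using hs.tendstoUniformlyOn
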